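/- Let n be a finite type with decidable equality, and let A, B : Matrix n n ℝ be symmetric. Suppose Y, V, W : ℝ → (n → ℝ) satisfy, for all t : ℝ and i : n, HasDerivAt (fun s => Y s i) (V t i) t and HasDerivAt (fun s => V s i) (W t i) t, and for all t, A.mulVec (W t) + B.mulVec (Y t) = 0 (the equations of small oscillations). Then the energy is conserved: the function t ↦ (V t) ⬝ᵥ A.mulVec (V t) + (Y t) ⬝ᵥ B.mulVec (Y t) is constant on ℝ. (Laplace's 1789 'artifice particulier': the conservation of the vis viva for systems whose coefficients exhibit the mirror symmetry (i,j) = (j,i) and [i,j] = [j,i].) -/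

import Mathlib

/-! By the symmetry of the matrices, the derivative of `V ⬝ᵥ A V` is `2 W ⬝ᵥ A V = 2 V ⬝ᵥ A W`
and that of `Y ⬝ᵥ B Y` is `2 V ⬝ᵥ B Y`. Their sum is `2 V ⬝ᵥ (A W + B Y) = 0`,
so the energy has zero derivative everywhere and is constant. -/

open Matrix

section Calculus

variable {𝕜 ι : Type*} [NontriviallyNormedField 𝕜] [Fintype ι]
  {x y : 𝕜 → ι → 𝕜} {x' y' : ι → 𝕜} {t : 𝕜}

theorem HasDerivAt.dotProduct (hx : HasDerivAt x x' t) (hy : HasDerivAt y y' t) :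
    HasDerivAt (fun s => x s ⬝ᵥ y s) (x' ⬝ᵥ y t + x t ⬝ᵥ y') t := by
  rw [hasDerivAt_pi] at hx hy
  simp only [_root_.dotProduct, ← Finset.sum_add_distrib]
  exact HasDerivAt.fun_sum fun i _ => (hx i).mul (hy i)

theorem HasDerivAt.mulVec {m : Type*} (M : Matrix m ι 𝕜) (hx : HasDerivAt x x' t) :
    HasDerivAt (fun s => M *ᵥ x s) (M *ᵥ x') t :=
  hasDerivAt_pi.2 fun i => by
    simp only [Matrix.mulVec, _root_.dotProduct]
    exact HasDerivAt.fun_sum fun j _ => (hasDerivAt_pi.1 hx j).const_mul (M i j)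

theorem Matrix.IsSymm.dotProduct_mulVec_comm {R : Type*} [CommSemiring R] {M : Matrix ι ι R}
    (hM : M.IsSymm) (v w : ι → R) : v ⬝ᵥ M *ᵥ w = w ⬝ᵥ M *ᵥ v := by
  rw [dotProduct_mulVec, ← mulVec_transpose, hM.eq, dotProduct_comm]

theorem Matrix.IsSymm.hasDerivAt_dotProduct_mulVec {M : Matrix ι ι 𝕜} (hM : M.IsSymm)
    (hx : HasDerivAt x x' t) :
    HasDerivAt (fun s => x s ⬝ᵥ M *ᵥ x s) (2 * (x' ⬝ᵥ M *ᵥ x t)) t := by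
  convert hx.dotProduct (hx.mulVec M) using 1
  rw [hM.dotProduct_mulVec_comm (x t), two_mul]

end Calculus

theorem energy_conservation_small_oscillations_general
    {n : Type*} [Fintype n]
    (A B : Matrix n n ℝ) (hA : A.IsSymm) (hB : B.IsSymm)
    (Y V W : ℝ → (n → ℝ))
    (hY : ∀ (t : ℝ) (i : n), HasDerivAt (fun s => Y s i) (V t i) t)
    (hV : ∀ (t : ℝ) (i : n), HasDerivAt (fun s => V s i) (W t i) t)
    (heq : ∀ t : ℝ, A.mulVec (W t) + B.mulVec (Y t) = 0) :
    ∀ t₁ t₂ : ℝ,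
      (V t₁) ⬝ᵥ A.mulVec (V t₁) + (Y t₁) ⬝ᵥ B.mulVec (Y t₁) =
      (V t₂) ⬝ᵥ A.mulVec (V t₂) + (Y t₂) ⬝ᵥ B.mulVec (Y t₂) := by
  have energy_hasDerivAt_zero : ∀ t, HasDerivAt
      (fun s => V s ⬝ᵥ A *ᵥ V s + Y s ⬝ᵥ B *ᵥ Y s) 0 t := by
    intro t
    have hderiv := (hA.hasDerivAt_dotProduct_mulVec (hasDerivAt_pi.2 (hV t))).fun_add
      (hB.hasDerivAt_dotProduct_mulVec (hasDerivAt_pi.2 (hY t)))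
    rwa [hA.dotProduct_mulVec_comm (W t), ← mul_add, ← dotProduct_add, heq t, dotProduct_zero,
      mul_zero] at hderiv
  exact is_const_of_deriv_eq_zero (fun t => (energy_hasDerivAt_zero t).differentiableAt)
    (fun t => (energy_hasDerivAt_zero t).deriv)

theorem energy_conservation_small_oscillations
    {n : Type*} [Fintype n] [DecidableEq n]
    (A B : Matrix n n ℝ) (hA : A.IsSymm) (hB : B.IsSymm)
    (Y V W : ℝ → (n → ℝ))
    (hY : ∀ (t : ℝ) (i : n), HasDerivAt (fun s => Y s i) (V t i) t)
    (hV : ∀ (t : ℝ) (i : n), HasDerivAt (fun s => V s i) (W t i) t)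
    (heq : ∀ t : ℝ, A.mulVec (W t) + B.mulVec (Y t) = 0) :
    ∀ t₁ t₂ : ℝ,
      (V t₁) ⬝ᵥ A.mulVec (V t₁) + (Y t₁) ⬝ᵥ B.mulVec (Y t₁) =
      (V t₂) ⬝ᵥ A.mulVec (V t₂) + (Y t₂) ⬝ᵥ B.mulVec (Y t₂) :=
  energy_conservation_small_oscillations_general A B hA hB Y V W hY hV heq
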